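/- arXiv:2506.00501 — 2 statements merged into one kernel-verified Lean document; each statement's English description precedes it below -/
import Mathlib

section
/- Suppose ν, δ : [0,∞) → (0,∞) are differentiable with ν'(t) + ζ(t)ν(t) = 1 and δ'(t) + ζ(t)δ(t) = 0 for a continuous ζ, and suppose x, y are differentiable curves satisfying ν(t)·A x'(t) - δ(t)·y'(t) + A x(t) = b for all t. Then the function G(t) = (ν(t)/δ(t))·(A x(t) - b) - y(t) is constant. -/
open Set

/-- conservation law: if `ν' + ζ ν = 1`, `δ' + ζ δ = 0` with `ζ`
continuous and `ν, δ > 0`, and differentiable curves `x, y` satisfy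
`ν t • A x'(t) - δ t • y'(t) + A x(t) = b` on `[0,∞)`, then
`G t = (ν t / δ t) • (A x(t) - b) - y t` is constant on `[0,∞)`. -/
theorem conservation_law_G_constant
    {X Y : Type*} [NormedAddCommGroup X] [InnerProductSpace ℝ X]
    [NormedAddCommGroup Y] [InnerProductSpace ℝ Y]
    (A : X →L[ℝ] Y) (b : Y)
    (ζ ν ν' δ δ' : ℝ → ℝ) (hζ : Continuous ζ)
    (hνpos : ∀ t, 0 ≤ t → 0 < ν t) (hδpos : ∀ t, 0 ≤ t → 0 < δ t)
    (hν : ∀ t, 0 ≤ t → HasDerivAt ν (ν' t) t)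
    (hδ : ∀ t, 0 ≤ t → HasDerivAt δ (δ' t) t)
    (hνode : ∀ t, 0 ≤ t → ν' t + ζ t * ν t = 1)
    (hδode : ∀ t, 0 ≤ t → δ' t + ζ t * δ t = 0)
    (x : ℝ → X) (y : ℝ → Y) (x' : ℝ → X) (y' : ℝ → Y)
    (hx : ∀ t, 0 ≤ t → HasDerivAt x (x' t) t)
    (hy : ∀ t, 0 ≤ t → HasDerivAt y (y' t) t)
    (hode : ∀ t, 0 ≤ t → ν t • A (x' t) - δ t • y' t + A (x t) = b)
    (G : ℝ → Y) (hG : ∀ t, G t = (ν t / δ t) • (A (x t) - b) - y t) :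
    ∀ s t, 0 ≤ s → 0 ≤ t → G s = G t := by
  -- G has derivative 0 on [0, ∞)
  have key : ∀ t ∈ Ici (0:ℝ), HasDerivWithinAt G (0 : Y) (Ici (0:ℝ)) t := by
    intro t ht
    rw [mem_Ici] at ht
    have hδne : δ t ≠ 0 := (hδpos t ht).ne'
    -- derivative of ν/δ
    have hq : HasDerivAt (fun s => ν s / δ s)
        ((ν' t * δ t - ν t * δ' t) / (δ t) ^ 2) t :=
      (hν t ht).div (hδ t ht) hδne
    -- derivative of A ∘ x minus b
    have hAx : HasDerivAt (fun s => A (x s) - b) (A (x' t)) t :=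
      ((A.hasFDerivAt.comp_hasDerivAt t (hx t ht))).sub_const b
    have hGdev : HasDerivAt (fun s => (ν s / δ s) • (A (x s) - b) - y s)
        ((ν t / δ t) • (A (x' t))
          + ((ν' t * δ t - ν t * δ' t) / (δ t) ^ 2) • (A (x t) - b) - y' t) t :=
      (hq.smul hAx).sub (hy t ht)
    have hGdev' : HasDerivAt G
        ((ν t / δ t) • (A (x' t))
          + ((ν' t * δ t - ν t * δ' t) / (δ t) ^ 2) • (A (x t) - b) - y' t) t := by
      have : G = fun s => (ν s / δ s) • (A (x s) - b) - y s := funext hG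
      rw [this]; exact hGdev
    have hcoef : (ν' t * δ t - ν t * δ' t) / (δ t) ^ 2 = 1 / δ t := by
      have h1 := hνode t ht
      have h2 := hδode t ht
      have hν' : ν' t = 1 - ζ t * ν t := by linarith
      have hδ' : δ' t = -(ζ t * δ t) := by linarith
      rw [hν', hδ']
      field_simp
      ring
    have hconstraint : A (x t) - b = δ t • y' t - ν t • A (x' t) := by
      have hb := hode t ht
      rw [← hb]; abel
    have hzero : (ν t / δ t) • (A (x' t))
          + ((ν' t * δ t - ν t * δ' t) / (δ t) ^ 2) • (A (x t) - b) - y' t = 0 := by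
      rw [hcoef, hconstraint, smul_sub, smul_smul, smul_smul]
      have h1 : 1 / δ t * δ t = 1 := by field_simp
      have h2 : 1 / δ t * ν t = ν t / δ t := by ring
      rw [h1, h2, one_smul]
      abel
    rw [hzero] at hGdev'
    exact hGdev'.hasDerivWithinAt
  intro s t hs ht
  have h := (convex_Ici (0:ℝ)).norm_image_sub_le_of_norm_hasDerivWithin_le
    (C := 0) (f' := fun _ => (0:Y)) key (fun u _ => by simp) (mem_Ici.mpr hs) (mem_Ici.mpr ht)
  have hle : ‖G t - G s‖ ≤ 0 := by simpa using h
  exact (eq_of_sub_eq_zero (norm_le_zero_iff.mp hle)).symm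
end

section
/- Under the conservation law G constant (with G(t) = (ν(t)/δ(t))(Ax(t)-b) - y(t)), and with δ(t) = δ₀/Ξ(t), ν(t) = (ν₀ + ∫₀ᵗ Ξ)/Ξ(t), one has the bound ‖Ax(t) - b‖ ≤ (ν₀‖Ax₀ - b‖ + δ₀‖y(t) - ȳ‖ + δ₀‖ȳ - y₀‖)/(ν₀ + ∫₀ᵗ Ξ(s) ds) for any ȳ ∈ 𝒴. -/
open MeasureTheory Set

/-- under the conservation law `G` constant, with
`δ t = δ₀ / Ξ t` and `ν t = (ν₀ + ∫₀ᵗ Ξ) / Ξ t`, one has the feasibility bound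
`‖A x(t) - b‖ ≤ (ν₀‖A x₀ - b‖ + δ₀‖y(t) - yb‖ + δ₀‖yb - y₀‖) / (ν₀ + ∫₀ᵗ Ξ)`. -/
theorem feasibility_rate_bound
    {X Y : Type*} [NormedAddCommGroup X] [InnerProductSpace ℝ X]
    [NormedAddCommGroup Y] [InnerProductSpace ℝ Y]
    (A : X →L[ℝ] Y) (b : Y)
    (ζ : ℝ → ℝ) (hζnonneg : ∀ t, 0 ≤ t → 0 ≤ ζ t)
    (hζint : ∀ t, IntervalIntegrable ζ volume 0 t)
    (Ξ : ℝ → ℝ) (hΞ : ∀ t, Ξ t = Real.exp (∫ s in (0:ℝ)..t, ζ s))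
    (ν₀ δ₀ : ℝ) (hν₀ : 0 < ν₀) (hδ₀ : 0 < δ₀)
    (ν δ : ℝ → ℝ)
    (hν : ∀ t, ν t = (ν₀ + ∫ s in (0:ℝ)..t, Ξ s) / Ξ t)
    (hδ : ∀ t, δ t = δ₀ / Ξ t)
    (x : ℝ → X) (y : ℝ → Y)
    (hG : ∀ t, 0 ≤ t →
      (ν t / δ t) • (A (x t) - b) - y t = (ν 0 / δ 0) • (A (x 0) - b) - y 0) :
    ∀ t, 0 ≤ t → ∀ yb : Y,
      ‖A (x t) - b‖ ≤
        (ν₀ * ‖A (x 0) - b‖ + δ₀ * ‖y t - yb‖ + δ₀ * ‖yb - y 0‖) /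
          (ν₀ + ∫ s in (0:ℝ)..t, Ξ s) := by
  intro t ht yb
  set I : ℝ := ∫ s in (0:ℝ)..t, Ξ s with hI
  have hΞpos : ∀ s, 0 < Ξ s := fun s => (hΞ s) ▸ Real.exp_pos _
  have hInn : 0 ≤ I := intervalIntegral.integral_nonneg ht (fun s _ => (hΞpos s).le)
  have hden : 0 < ν₀ + I := by linarith
  have hΞ0 : Ξ 0 = 1 := by rw [hΞ]; simp
  have hν0 : ν 0 = ν₀ := by rw [hν]; simp [hΞ0]
  have hδ0 : δ 0 = δ₀ := by rw [hδ]; simp [hΞ0]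
  have hc : ν t / δ t = (ν₀ + I) / δ₀ := by
    have hne : Ξ t ≠ 0 := (hΞpos t).ne'
    rw [hν, hδ, ← hI]
    field_simp
  have key : ((ν₀ + I) / δ₀) • (A (x t) - b)
      = (ν₀ / δ₀) • (A (x 0) - b) + ((y t - yb) + (yb - y 0)) := by
    have h := hG t ht
    rw [hc, hν0, hδ0] at h
    have : ((ν₀ + I) / δ₀) • (A (x t) - b) - y t + y t
        = (ν₀ / δ₀) • (A (x 0) - b) - y 0 + y t := by rw [h]
    rw [sub_add_cancel] at this
    rw [this]; abel
  have hnorm : ((ν₀ + I) / δ₀) * ‖A (x t) - b‖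
      ≤ (ν₀ / δ₀) * ‖A (x 0) - b‖ + (‖y t - yb‖ + ‖yb - y 0‖) := by
    have h1 : ‖((ν₀ + I) / δ₀) • (A (x t) - b)‖
        = ((ν₀ + I) / δ₀) * ‖A (x t) - b‖ := by
      rw [norm_smul, Real.norm_of_nonneg (by positivity)]
    calc ((ν₀ + I) / δ₀) * ‖A (x t) - b‖
        = ‖((ν₀ + I) / δ₀) • (A (x t) - b)‖ := h1.symm
      _ = ‖(ν₀ / δ₀) • (A (x 0) - b) + ((y t - yb) + (yb - y 0))‖ := by rw [key]
      _ ≤ ‖(ν₀ / δ₀) • (A (x 0) - b)‖ + ‖(y t - yb) + (yb - y 0)‖ := norm_add_le _ _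
      _ ≤ (ν₀ / δ₀) * ‖A (x 0) - b‖ + (‖y t - yb‖ + ‖yb - y 0‖) := by
          gcongr ?_ + ?_
          · rw [norm_smul, Real.norm_of_nonneg (by positivity)]
          · exact norm_add_le _ _
  rw [le_div_iff₀ hden]
  have h2 : δ₀ * (((ν₀ + I) / δ₀) * ‖A (x t) - b‖)
      ≤ δ₀ * ((ν₀ / δ₀) * ‖A (x 0) - b‖ + (‖y t - yb‖ + ‖yb - y 0‖)) := by
    exact mul_le_mul_of_nonneg_left hnorm hδ₀.le
  have hδne : δ₀ ≠ 0 := hδ₀.ne'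
  field_simp at h2
  nlinarith [h2]
end
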